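/- Let a, b, c, d ∈ ℂ³ be nonzero vectors, and let φ : ℂ³ × ℂ³ → ℂ⁶ be the map φ((x,y,z),(p,q,r)) = (2xp, 2yq, 2zr, xq+yp, xr+zp, yr+zq). If φ(a,b) = φ(c,d), then there exists a nonzero scalar λ ∈ ℂ such that either (c = λ·a and d = λ⁻¹·b) or (c = λ·b and d = λ⁻¹·a). -/
import Mathlib

/-- Algebraic helper: from three vanishing products we get that one of the
pairs vanishes. -/
private lemma quad_cases (A B C D : ℂ) (h1 : A * C = 0) (h2 : B * D = 0)
    (h3 : (A + B) * (C + D) = 0) : (A = 0 ∧ B = 0) ∨ (C = 0 ∧ D = 0) := by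
  have h5 : A * D + B * C = 0 := by linear_combination h3 - h1 - h2
  have hAD : A * D = 0 := by
    have hsq : (A * D) ^ 2 = 0 := by linear_combination (A * D) * h5 - B * D * h1
    exact pow_eq_zero_iff (two_ne_zero) |>.mp hsq
  have hBC : B * C = 0 := by linear_combination h5 - hAD
  by_cases hA : A = 0
  · by_cases hB : B = 0
    · exact Or.inl ⟨hA, hB⟩
    · exact Or.inr ⟨by rcases mul_eq_zero.mp hBC with h | h <;> tauto,
        by rcases mul_eq_zero.mp h2 with h | h <;> tauto⟩
  · exact Or.inr ⟨by rcases mul_eq_zero.mp h1 with h | h <;> tauto,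
      by rcases mul_eq_zero.mp hAD with h | h <;> tauto⟩

/-- Covering lemma, special case `c0 ≠ 0`. -/
private lemma cover0 (c0 c1 c2 a0 a1 a2 b0 b1 b2 : ℂ) (hc0 : c0 ≠ 0)
    (H : ∀ x0 x1 x2 : ℂ, c0 * x0 + c1 * x1 + c2 * x2 = 0 →
      (a0 * x0 + a1 * x1 + a2 * x2) * (b0 * x0 + b1 * x1 + b2 * x2) = 0) :
    (∃ α : ℂ, a0 = α * c0 ∧ a1 = α * c1 ∧ a2 = α * c2) ∨
    (∃ β : ℂ, b0 = β * c0 ∧ b1 = β * c1 ∧ b2 = β * c2) := by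
  have he := H (-c1) c0 0 (by ring)
  have hf := H (-c2) 0 c0 (by ring)
  have hef := H (-(c1 + c2)) c0 c0 (by ring)
  have key := quad_cases (a1 * c0 - a0 * c1) (a2 * c0 - a0 * c2)
      (b1 * c0 - b0 * c1) (b2 * c0 - b0 * c2)
      (by linear_combination he) (by linear_combination hf)
      (by linear_combination hef)
  rcases key with ⟨hA, hB⟩ | ⟨hC, hD⟩
  · refine Or.inl ⟨a0 / c0, by field_simp, ?_, ?_⟩
    · field_simp; linear_combination hA
    · field_simp; linear_combination hB
  · refine Or.inr ⟨b0 / c0, by field_simp, ?_, ?_⟩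
    · field_simp; linear_combination hC
    · field_simp; linear_combination hD

/-- Covering lemma: if the product of linear forms `(a·x)(b·x)` vanishes on the
plane `c·x = 0`, then `a` or `b` is proportional to `c`. -/
private lemma cover (c0 c1 c2 a0 a1 a2 b0 b1 b2 : ℂ)
    (hc : ¬(c0 = 0 ∧ c1 = 0 ∧ c2 = 0))
    (H : ∀ x0 x1 x2 : ℂ, c0 * x0 + c1 * x1 + c2 * x2 = 0 →
      (a0 * x0 + a1 * x1 + a2 * x2) * (b0 * x0 + b1 * x1 + b2 * x2) = 0) :
    (∃ α : ℂ, a0 = α * c0 ∧ a1 = α * c1 ∧ a2 = α * c2) ∨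
    (∃ β : ℂ, b0 = β * c0 ∧ b1 = β * c1 ∧ b2 = β * c2) := by
  by_cases hc0 : c0 = 0
  · by_cases hc1 : c1 = 0
    · have hc2 : c2 ≠ 0 := fun h => hc ⟨hc0, hc1, h⟩
      have := cover0 c2 c1 c0 a2 a1 a0 b2 b1 b0 hc2
        (fun x0 x1 x2 h => by linear_combination H x2 x1 x0 (by linear_combination h))
      rcases this with ⟨α, h₁, h₂, h₃⟩ | ⟨β, h₁, h₂, h₃⟩
      · exact Or.inl ⟨α, h₃, h₂, h₁⟩
      · exact Or.inr ⟨β, h₃, h₂, h₁⟩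
    · have := cover0 c1 c0 c2 a1 a0 a2 b1 b0 b2 hc1
        (fun x0 x1 x2 h => by linear_combination H x1 x0 x2 (by linear_combination h))
      rcases this with ⟨α, h₁, h₂, h₃⟩ | ⟨β, h₁, h₂, h₃⟩
      · exact Or.inl ⟨α, h₂, h₁, h₃⟩
      · exact Or.inr ⟨β, h₂, h₁, h₃⟩
  · exact cover0 c0 c1 c2 a0 a1 a2 b0 b1 b2 hc0 H

/-- Zero-divisor lemma, special case `c0 ≠ 0`. -/
private lemma zeroB0 (c0 c1 c2 w0 w1 w2 : ℂ) (hc0 : c0 ≠ 0)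
    (H : ∀ x0 x1 x2 : ℂ,
      (c0 * x0 + c1 * x1 + c2 * x2) * (w0 * x0 + w1 * x1 + w2 * x2) = 0) :
    w0 = 0 ∧ w1 = 0 ∧ w2 = 0 := by
  have h00 := H 1 0 0
  have hw0 : w0 = 0 := by
    have h' : c0 * w0 = 0 := by linear_combination h00
    exact (mul_eq_zero.mp h').resolve_left hc0
  have h01 := H 1 1 0
  have h11 := H 0 1 0
  have hw1 : w1 = 0 := by
    have hcw : c0 * w1 = 0 := by
      linear_combination h01 - h11 - (c0 + c1) * hw0
    exact (mul_eq_zero.mp hcw).resolve_left hc0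
  have h02 := H 1 0 1
  have h22 := H 0 0 1
  have hw2 : w2 = 0 := by
    have hcw : c0 * w2 = 0 := by
      linear_combination h02 - h22 - (c0 + c2) * hw0
    exact (mul_eq_zero.mp hcw).resolve_left hc0
  exact ⟨hw0, hw1, hw2⟩

/-- Zero-divisor lemma: if `(c·x)(w·x) = 0` for all `x` and `c ≠ 0`, then `w = 0`. -/
private lemma zeroB (c0 c1 c2 w0 w1 w2 : ℂ) (hc : ¬(c0 = 0 ∧ c1 = 0 ∧ c2 = 0))
    (H : ∀ x0 x1 x2 : ℂ,
      (c0 * x0 + c1 * x1 + c2 * x2) * (w0 * x0 + w1 * x1 + w2 * x2) = 0) :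
    w0 = 0 ∧ w1 = 0 ∧ w2 = 0 := by
  by_cases hc0 : c0 = 0
  · by_cases hc1 : c1 = 0
    · have hc2 : c2 ≠ 0 := fun h => hc ⟨hc0, hc1, h⟩
      have := zeroB0 c2 c1 c0 w2 w1 w0 hc2
        (fun x0 x1 x2 => by linear_combination H x2 x1 x0)
      exact ⟨this.2.2, this.2.1, this.1⟩
    · have := zeroB0 c1 c0 c2 w1 w0 w2 hc1
        (fun x0 x1 x2 => by linear_combination H x1 x0 x2)
      exact ⟨this.2.1, this.1, this.2.2⟩
  · exact zeroB0 c0 c1 c2 w0 w1 w2 hc0 H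

/-- φ((x,y,z),(p,q,r)) = (2xp, 2yq, 2zr, xq+yp, xr+zp, yr+zq) is 2:1 up to scalars:
if a,b,c,d ∈ ℂ³ are nonzero and φ(a,b) = φ(c,d), then there is λ ≠ 0 with
(c = λa, d = λ⁻¹b) or (c = λb, d = λ⁻¹a). -/
theorem phi_two_to_one (a b c d : Fin 3 → ℂ)
    (ha : a ≠ 0) (hb : b ≠ 0) (hc : c ≠ 0) (hd : d ≠ 0)
    (h0 : 2 * a 0 * b 0 = 2 * c 0 * d 0)
    (h1 : 2 * a 1 * b 1 = 2 * c 1 * d 1)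
    (h2 : 2 * a 2 * b 2 = 2 * c 2 * d 2)
    (h3 : a 0 * b 1 + a 1 * b 0 = c 0 * d 1 + c 1 * d 0)
    (h4 : a 0 * b 2 + a 2 * b 0 = c 0 * d 2 + c 2 * d 0)
    (h5 : a 1 * b 2 + a 2 * b 1 = c 1 * d 2 + c 2 * d 1) :
    ∃ l : ℂ, l ≠ 0 ∧
      ((c = l • a ∧ d = l⁻¹ • b) ∨ (c = l • b ∧ d = l⁻¹ • a)) := by
  -- the product of linear forms identity
  have P : ∀ x0 x1 x2 : ℂ,
      (a 0 * x0 + a 1 * x1 + a 2 * x2) * (b 0 * x0 + b 1 * x1 + b 2 * x2) =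
      (c 0 * x0 + c 1 * x1 + c 2 * x2) * (d 0 * x0 + d 1 * x1 + d 2 * x2) := by
    intro x0 x1 x2
    linear_combination (x0 ^ 2 / 2) * h0 + (x1 ^ 2 / 2) * h1 + (x2 ^ 2 / 2) * h2 +
      (x0 * x1) * h3 + (x0 * x2) * h4 + (x1 * x2) * h5
  have hane : ¬(a 0 = 0 ∧ a 1 = 0 ∧ a 2 = 0) := by
    intro h; exact ha (funext fun i => by fin_cases i <;>
      simp [h.1, h.2.1, h.2.2])
  have hbne : ¬(b 0 = 0 ∧ b 1 = 0 ∧ b 2 = 0) := by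
    intro h; exact hb (funext fun i => by fin_cases i <;>
      simp [h.1, h.2.1, h.2.2])
  have hcne : ¬(c 0 = 0 ∧ c 1 = 0 ∧ c 2 = 0) := by
    intro h; exact hc (funext fun i => by fin_cases i <;>
      simp [h.1, h.2.1, h.2.2])
  have key := cover (c 0) (c 1) (c 2) (a 0) (a 1) (a 2) (b 0) (b 1) (b 2) hcne
    (fun x0 x1 x2 h => by rw [P x0 x1 x2, h, zero_mul])
  rcases key with ⟨α, ea0, ea1, ea2⟩ | ⟨β, eb0, eb1, eb2⟩
  · -- a = α • c, so c = α⁻¹ • a and d = α • b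
    have hα : α ≠ 0 := by
      rintro rfl
      exact hane ⟨by simpa using ea0, by simpa using ea1, by simpa using ea2⟩
    have hd' := zeroB (c 0) (c 1) (c 2) (α * b 0 - d 0) (α * b 1 - d 1)
      (α * b 2 - d 2) hcne (fun x0 x1 x2 => by
        linear_combination P x0 x1 x2 -
          (b 0 * x0 + b 1 * x1 + b 2 * x2) * (x0 * ea0 + x1 * ea1 + x2 * ea2))
    refine ⟨α⁻¹, inv_ne_zero hα, Or.inl ⟨funext fun i => ?_, funext fun i => ?_⟩⟩
    · fin_cases i <;> simp [Pi.smul_apply, smul_eq_mul] <;>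
        field_simp <;> [linear_combination -ea0; linear_combination -ea1;
          linear_combination -ea2]
    · have e0 : d 0 = α * b 0 := by linear_combination -hd'.1
      have e1 : d 1 = α * b 1 := by linear_combination -hd'.2.1
      have e2 : d 2 = α * b 2 := by linear_combination -hd'.2.2
      fin_cases i <;> simp [Pi.smul_apply, smul_eq_mul, inv_inv, e0, e1, e2]
  · -- b = β • c, so c = β⁻¹ • b and d = β • a
    have hβ : β ≠ 0 := by
      rintro rfl
      exact hbne ⟨by simpa using eb0, by simpa using eb1, by simpa using eb2⟩
    have hd' := zeroB (c 0) (c 1) (c 2) (β * a 0 - d 0) (β * a 1 - d 1)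
      (β * a 2 - d 2) hcne (fun x0 x1 x2 => by
        linear_combination P x0 x1 x2 -
          (a 0 * x0 + a 1 * x1 + a 2 * x2) * (x0 * eb0 + x1 * eb1 + x2 * eb2))
    refine ⟨β⁻¹, inv_ne_zero hβ, Or.inr ⟨funext fun i => ?_, funext fun i => ?_⟩⟩
    · fin_cases i <;> simp [Pi.smul_apply, smul_eq_mul] <;>
        field_simp <;> [linear_combination -eb0; linear_combination -eb1;
          linear_combination -eb2]
    · have e0 : d 0 = β * a 0 := by linear_combination -hd'.1
      have e1 : d 1 = β * a 1 := by linear_combination -hd'.2.1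
      have e2 : d 2 = β * a 2 := by linear_combination -hd'.2.2
      fin_cases i <;> simp [Pi.smul_apply, smul_eq_mul, inv_inv, e0, e1, e2]
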